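/- Let G be a finite set with weights p_J > 0 and P(X) = Σ_{J∈X} p_J for X ⊆ G, let a > 0, q > 0 with 2a < q, let R ≥ 0, and define g(X) = max{2a + P(X), q} + q + max{R + P(G \ X), q} for X ⊆ G. Assume there exists X ⊆ G with P(X) > q − 2a, and set OPT3 = min{P(X) : X ⊆ G, P(X) > q − 2a} and OPT4 = max{P(Y) : Y ⊆ G, P(Y) ≤ q − 2a}. Let ε > 0, and suppose C ⊆ G satisfies q − 2a < P(C) ≤ (1+ε)·OPT3 and D ⊆ G satisfies P(D) ≤ q − 2a and P(D) ≥ (1−ε)·OPT4. Then min{g(C), g(D)} ≤ (1+ε)·min_{X ⊆ G} g(X). -/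

import Mathlib

/-!
Both branches of `g` are `1`-Lipschitz in `P(X)`: above the capacity `q - 2a` the objective is
nondecreasing in `P(X)`, below it nonincreasing. So if the optimum `X` lies above the capacity,
`P(C) ≤ (1+ε)·OPT3 ≤ P(X) + ε·P(X)` costs at most `ε·P(X) ≤ ε·g(X)`; if it lies below,
`P(D) ≥ (1-ε)·OPT4 ≥ P(X) - ε·q` costs at most `ε·q ≤ ε·g(X)`.
-/

open Finset

noncomputable section

/-- The constrained-makespan objective of Lemma 6.4:
`g(X) = max {2a + P(X), q} + q + max {R + P(G \ X), q}`. -/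
def gfun {J : Type*} [DecidableEq J] (G : Finset J) (pw : J → ℝ) (a q R : ℝ)
    (X : Finset J) : ℝ :=
  max (2 * a + ∑ j ∈ X, pw j) q + q + max (R + ∑ j ∈ G \ X, pw j) q

namespace Real

theorem max_add_max_le_of_le_add {A B q x y δ : ℝ} (hδ : 0 ≤ δ) (hy : q ≤ A + y)
    (hyx : y ≤ x + δ) :
    max (A + y) q + max (B - y) q ≤ max (A + x) q + max (B - x) q + δ := by
  have hA := le_max_left (A + x) q
  have hB := le_max_left (B - x) q
  have hq := le_max_right (B - x) q
  rw [max_eq_left hy, add_max]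
  exact max_le (by linarith) (by linarith)

theorem max_add_max_le_of_sub_le {A B q x y δ : ℝ} (hδ : 0 ≤ δ) (hy : A + y ≤ q)
    (hxy : x - δ ≤ y) :
    max (A + y) q + max (B - y) q ≤ max (A + x) q + max (B - x) q + δ := by
  have hA := le_max_right (A + x) q
  have hB := le_max_left (B - x) q
  have hq := le_max_right (B - x) q
  rw [max_eq_right hy, add_max]
  exact max_le (by linarith) (by linarith)

end Real

section gfun

variable {J : Type*} [DecidableEq J] {G : Finset J} {pw : J → ℝ} {a q R : ℝ}

theorem gfun_eq_of_subset {X : Finset J} (hX : X ⊆ G) :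
    gfun G pw a q R X =
      max (2 * a + ∑ j ∈ X, pw j) q + q + max (R + ∑ j ∈ G, pw j - ∑ j ∈ X, pw j) q := by
  rw [gfun, sum_sdiff_eq_sub hX, add_sub_assoc]

theorem add_sum_add_le_gfun (X : Finset J) :
    2 * a + ∑ j ∈ X, pw j + 2 * q ≤ gfun G pw a q R X := by
  have := le_max_left (2 * a + ∑ j ∈ X, pw j) q
  have := le_max_right (R + ∑ j ∈ G \ X, pw j) q
  rw [gfun]
  linarith

theorem three_mul_le_gfun (X : Finset J) : 3 * q ≤ gfun G pw a q R X := by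
  have := le_max_right (2 * a + ∑ j ∈ X, pw j) q
  have := le_max_right (R + ∑ j ∈ G \ X, pw j) q
  rw [gfun]
  linarith

theorem gfun_le_add_of_lt_sum {X Y : Finset J} (hX : X ⊆ G) (hY : Y ⊆ G) {δ : ℝ}
    (hδ : 0 ≤ δ) (hY_gt : q - 2 * a < ∑ j ∈ Y, pw j)
    (hYX : ∑ j ∈ Y, pw j ≤ ∑ j ∈ X, pw j + δ) :
    gfun G pw a q R Y ≤ gfun G pw a q R X + δ := by
  rw [gfun_eq_of_subset hX, gfun_eq_of_subset hY]
  linarith [Real.max_add_max_le_of_le_add (B := R + ∑ j ∈ G, pw j) hδ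
    (by linarith : q ≤ 2 * a + ∑ j ∈ Y, pw j) hYX]

theorem gfun_le_add_of_sum_le {X Y : Finset J} (hX : X ⊆ G) (hY : Y ⊆ G) {δ : ℝ}
    (hδ : 0 ≤ δ) (hY_le : ∑ j ∈ Y, pw j ≤ q - 2 * a)
    (hXY : ∑ j ∈ X, pw j - δ ≤ ∑ j ∈ Y, pw j) :
    gfun G pw a q R Y ≤ gfun G pw a q R X + δ := by
  rw [gfun_eq_of_subset hX, gfun_eq_of_subset hY]
  linarith [Real.max_add_max_le_of_sub_le (B := R + ∑ j ∈ G, pw j) hδ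
    (by linarith : 2 * a + ∑ j ∈ Y, pw j ≤ q) hXY]

end gfun

theorem stmt19_general {J : Type*} [DecidableEq J] (G : Finset J) (pw : J → ℝ)
    (a q R : ℝ) (ha : 0 < a) (hq : 0 < q) (haq : 2 * a < q)
    (OPT3 OPT4 : ℝ)
    (hOPT3 : IsLeast {x : ℝ | ∃ X ⊆ G, x = (∑ j ∈ X, pw j) ∧ q - 2 * a < x} OPT3)
    (hOPT4 : IsGreatest {x : ℝ | ∃ Y ⊆ G, x = (∑ j ∈ Y, pw j) ∧ x ≤ q - 2 * a} OPT4)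
    (ε : ℝ) (hε : 0 < ε)
    (C : Finset J) (hCG : C ⊆ G)
    (hC1 : q - 2 * a < ∑ j ∈ C, pw j) (hC2 : (∑ j ∈ C, pw j) ≤ (1 + ε) * OPT3)
    (D : Finset J) (hDG : D ⊆ G)
    (hD1 : (∑ j ∈ D, pw j) ≤ q - 2 * a) (hD2 : (1 - ε) * OPT4 ≤ ∑ j ∈ D, pw j) :
    min (gfun G pw a q R C) (gfun G pw a q R D)
      ≤ (1 + ε) * (G.powerset.inf' ⟨∅, Finset.empty_mem_powerset G⟩
          (gfun G pw a q R)) := by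
  obtain ⟨X, hXmem, hX_opt⟩ := exists_mem_eq_inf' ⟨∅, empty_mem_powerset G⟩ (gfun G pw a q R)
  have hXG : X ⊆ G := mem_powerset.mp hXmem
  rw [hX_opt]
  rcases lt_or_ge (q - 2 * a) (∑ j ∈ X, pw j) with hX | hX
  · have hOPT3_le : OPT3 ≤ ∑ j ∈ X, pw j := hOPT3.2 ⟨X, hXG, rfl, hX⟩
    have hC_le : ∑ j ∈ C, pw j ≤ ∑ j ∈ X, pw j + ε * ∑ j ∈ X, pw j := by nlinarith
    have hX_le : ∑ j ∈ X, pw j ≤ gfun G pw a q R X := by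
      linarith [(add_sum_add_le_gfun X : 2 * a + _ + 2 * q ≤ gfun G pw a q R X)]
    calc min (gfun G pw a q R C) (gfun G pw a q R D)
        ≤ gfun G pw a q R C := min_le_left _ _
      _ ≤ gfun G pw a q R X + ε * ∑ j ∈ X, pw j :=
        gfun_le_add_of_lt_sum hXG hCG (mul_nonneg hε.le (by linarith)) hC1 hC_le
      _ ≤ (1 + ε) * gfun G pw a q R X := by nlinarith
  · have hle_OPT4 : ∑ j ∈ X, pw j ≤ OPT4 := hOPT4.2 ⟨X, hXG, rfl, hX⟩
    obtain ⟨-, -, -, hOPT4_le⟩ := hOPT4.1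
    have hD_ge : ∑ j ∈ X, pw j - ε * q ≤ ∑ j ∈ D, pw j := by nlinarith
    have hq_le : q ≤ gfun G pw a q R X := by
      linarith [(three_mul_le_gfun X : 3 * q ≤ gfun G pw a q R X)]
    calc min (gfun G pw a q R C) (gfun G pw a q R D)
        ≤ gfun G pw a q R D := min_le_right _ _
      _ ≤ gfun G pw a q R X + ε * q :=
        gfun_le_add_of_sum_le hXG hDG (mul_nonneg hε.le hq.le) hD1 hD_ge
      _ ≤ (1 + ε) * gfun G pw a q R X := by nlinarith

/-- Lemma 6.6 (abstract form): if `C` is a `(1+ε)`-approximate Min-Knapsack solution and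
`D` a `(1−ε)`-approximate Max-Knapsack solution for capacity `q − 2a`, then
`min {g(C), g(D)} ≤ (1+ε) · min_{X ⊆ G} g(X)`. -/
theorem stmt19 {J : Type*} [DecidableEq J] (G : Finset J) (pw : J → ℝ)
    (hpw : ∀ j ∈ G, 0 < pw j)
    (a q R : ℝ) (ha : 0 < a) (hq : 0 < q) (haq : 2 * a < q) (hR : 0 ≤ R)
    (hex : ∃ X ⊆ G, q - 2 * a < ∑ j ∈ X, pw j)
    (OPT3 OPT4 : ℝ)
    (hOPT3 : IsLeast {x : ℝ | ∃ X ⊆ G, x = (∑ j ∈ X, pw j) ∧ q - 2 * a < x} OPT3)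
    (hOPT4 : IsGreatest {x : ℝ | ∃ Y ⊆ G, x = (∑ j ∈ Y, pw j) ∧ x ≤ q - 2 * a} OPT4)
    (ε : ℝ) (hε : 0 < ε)
    (C : Finset J) (hCG : C ⊆ G)
    (hC1 : q - 2 * a < ∑ j ∈ C, pw j) (hC2 : (∑ j ∈ C, pw j) ≤ (1 + ε) * OPT3)
    (D : Finset J) (hDG : D ⊆ G)
    (hD1 : (∑ j ∈ D, pw j) ≤ q - 2 * a) (hD2 : (1 - ε) * OPT4 ≤ ∑ j ∈ D, pw j) :
    min (gfun G pw a q R C) (gfun G pw a q R D)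
      ≤ (1 + ε) * (G.powerset.inf' ⟨∅, Finset.empty_mem_powerset G⟩
          (gfun G pw a q R)) :=
  stmt19_general G pw a q R ha hq haq OPT3 OPT4 hOPT3 hOPT4 ε hε C hCG hC1 hC2 D hDG hD1 hD2
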